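/- Let E = {(x,y) : y³ = 1 - x², x ∈ [-1/2,-1/4] ∪ [1/4,1/2]} ⊂ ℝ². Then E is not a 𝒫(x)⊗𝒫₂(y)-Markov set: there do not exist constants M, m > 0 such that ‖D^α P‖_E ≤ M^{|α|}(deg P)^{m|α|}‖P‖_E for all P ∈ 𝒫(x)⊗𝒫₂(y) and all α. -/

import Mathlib

open MvPolynomial

/-- The compact set `E = {(x,y) : y³ = 1-x², x ∈ [-1/2,-1/4] ∪ [1/4,1/2]}`. -/
def E12 : Set (ℝ × ℝ) :=
  {p | p.2 ^ 3 = 1 - p.1 ^ 2 ∧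
    p.1 ∈ Set.Icc (-(1:ℝ)/2) (-(1:ℝ)/4) ∪ Set.Icc ((1:ℝ)/4) ((1:ℝ)/2)}

/-!
On `E` the coordinate `y` equals `(1 - x²)^{1/3}`, and `x²` stays in `[0, 1/4]`, well inside the
disc of convergence of the binomial series of `(1 + u)^{1/3}`. Subtracting the `n`-th Taylor
polynomial in `u = -x²` from `y` therefore gives polynomials `Pₙ` of total degree `≤ 2n + 1` and
degree `1` in `y` whose sup norm on `E` decays geometrically, while `∂Pₙ/∂y = 1`. A Markov
inequality would give `1 ≤ M (2n + 1)^m ‖Pₙ‖_E`, which fails for large `n`.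
-/

open Finset Filter Topology Set

theorem Real.exists_abs_one_add_rpow_sub_sum_choose_le (s : ℝ) {ρ : ℝ} (hρ : ρ < 1) :
    ∃ a ∈ Ioo (0 : ℝ) 1, ∃ K > 0, ∀ x : ℝ, |x| < ρ → ∀ n : ℕ,
      |(1 + x) ^ s - ∑ k ∈ range n, Ring.choose s k * x ^ k| ≤ K * a ^ n := by
  obtain ⟨a, ha, K, hK, happrox⟩ :=
    (Real.one_add_rpow_hasFPowerSeriesOnBall_zero (a := s)).uniform_geometric_approx
      (r' := ρ.toNNReal) (by simpa using hρ)
  refine ⟨a, ha, K, hK, fun x hx n => ?_⟩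
  have hx_mem : x ∈ Metric.ball (0 : ℝ) ρ.toNNReal := by
    simpa using Or.inl hx
  simpa [FormalMultilinearSeries.partialSum, binomialSeries, mul_comm] using happrox x hx_mem n

theorem tendsto_rpow_mul_pow_atTop_nhds_zero (m : ℝ) {a : ℝ} (ha₀ : 0 < a) (ha₁ : a < 1) :
    Tendsto (fun n : ℕ => (n : ℝ) ^ m * a ^ n) atTop (𝓝 0) := by
  have hb : 0 < -Real.log a := neg_pos.2 (Real.log_neg ha₀ ha₁)
  refine ((tendsto_rpow_mul_exp_neg_mul_atTop_nhds_zero m _ hb).comp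
    tendsto_natCast_atTop_atTop).congr fun n => ?_
  simp only [Function.comp, neg_neg]
  rw [mul_comm (Real.log a), Real.exp_nat_mul, Real.exp_log ha₀]

noncomputable def cubeRootWitness (n : ℕ) : MvPolynomial (Fin 2) ℝ :=
  X 1 - ∑ k ∈ range n, C (Ring.choose (3⁻¹ : ℝ) k) * (-X 0 ^ 2) ^ k

theorem eval_cubeRootWitness (n : ℕ) (x y : ℝ) :
    eval ![x, y] (cubeRootWitness n) =
      y - ∑ k ∈ range n, Ring.choose (3⁻¹ : ℝ) k * (-x ^ 2) ^ k := by
  simp [cubeRootWitness]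

theorem pderiv_one_cubeRootWitness (n : ℕ) : pderiv 1 (cubeRootWitness n) = 1 := by
  simp [cubeRootWitness, pderiv_X]

theorem degreeOf_one_cubeRootWitness_le (n : ℕ) : (cubeRootWitness n).degreeOf 1 ≤ 1 := by
  have hX₀ : degreeOf 1 (X 0 ^ 2 : MvPolynomial (Fin 2) ℝ) = 0 :=
    Nat.eq_zero_of_le_zero ((degreeOf_pow_le _ _ _).trans (by simp [degreeOf_X]))
  refine (degreeOf_sub_le _ _ _).trans (max_le (by simp) ?_)
  refine (degreeOf_sum_le _ _ _).trans (Finset.sup_le fun k _ => ?_)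
  refine (degreeOf_C_mul_le _ _ _).trans ((degreeOf_pow_le _ _ _).trans ?_)
  simp [degreeOf_neg, hX₀]

theorem totalDegree_cubeRootWitness_le (n : ℕ) :
    (cubeRootWitness n).totalDegree ≤ 2 * n + 1 := by
  refine (totalDegree_sub _ _).trans (max_le (by simp [totalDegree_X]) ?_)
  refine (totalDegree_finsetSum _ _).trans (Finset.sup_le fun k hk => ?_)
  refine (totalDegree_mul _ _).trans ?_
  rw [totalDegree_C, zero_add]
  refine (totalDegree_pow _ _).trans ?_
  rw [totalDegree_neg, totalDegree_X_pow]
  have : k < n := Finset.mem_range.1 hk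
  nlinarith

theorem snd_eq_rpow_of_mem_E12 {p : ℝ × ℝ} (hp : p ∈ E12) :
    p.2 = (1 + -p.1 ^ 2) ^ (3⁻¹ : ℝ) := by
  obtain ⟨hy, hx⟩ := hp
  have hpos : 0 < 1 - p.1 ^ 2 := by
    rcases hx with ⟨h₁, h₂⟩ | ⟨h₁, h₂⟩ <;> nlinarith
  have hy₀ : 0 ≤ p.2 := by
    by_contra! hneg
    linarith [Odd.pow_neg (by decide : Odd 3) hneg]
  rw [← sub_eq_add_neg, ← hy]
  exact_mod_cast (Real.pow_rpow_inv_natCast hy₀ three_ne_zero).symm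

theorem abs_neg_fst_sq_le_of_mem_E12 {p : ℝ × ℝ} (hp : p ∈ E12) : |-p.1 ^ 2| ≤ 1 / 4 := by
  rw [abs_neg, abs_of_nonneg (sq_nonneg _)]
  rcases hp.2 with ⟨h₁, h₂⟩ | ⟨h₁, h₂⟩ <;> nlinarith

theorem half_mem_E12 : ((1 : ℝ) / 2, ((3 : ℝ) / 4) ^ (3⁻¹ : ℝ)) ∈ E12 := by
  refine ⟨?_, Or.inr ⟨by norm_num, by norm_num⟩⟩
  rw [show (3 : ℝ)⁻¹ = ((3 : ℕ) : ℝ)⁻¹ by norm_num,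
    Real.rpow_inv_natCast_pow (by norm_num) three_ne_zero]
  norm_num

theorem exists_abs_eval_cubeRootWitness_le :
    ∃ a ∈ Ioo (0 : ℝ) 1, ∃ K > 0, ∀ n : ℕ, ∀ p ∈ E12,
      |eval ![p.1, p.2] (cubeRootWitness n)| ≤ K * a ^ n := by
  obtain ⟨a, ha, K, hK, happrox⟩ :=
    Real.exists_abs_one_add_rpow_sub_sum_choose_le (3⁻¹ : ℝ) (ρ := 1 / 2) (by norm_num)
  refine ⟨a, ha, K, hK, fun n p hp => ?_⟩
  rw [eval_cubeRootWitness, snd_eq_rpow_of_mem_E12 hp]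
  exact happrox _ (by linarith [abs_neg_fst_sq_le_of_mem_E12 hp]) n

/-- `E` is not a `𝒫(x)⊗𝒫₂(y)`-Markov set: there are no `M, m > 0` such that
`‖D^α P‖_E ≤ M^{|α|} (deg P)^{m|α|} ‖P‖_E` for all `P ∈ 𝒫(x)⊗𝒫₂(y)` and all `α`. -/
theorem E12_not_Markov :
    ¬ ∃ M m : ℝ, 0 < M ∧ 0 < m ∧
      ∀ P : MvPolynomial (Fin 2) ℝ, P.degreeOf 1 ≤ 2 →
        ∀ α : Fin 2 → ℕ, ∀ C : ℝ,
          (∀ p ∈ E12, |eval ![p.1, p.2] P| ≤ C) →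
          ∀ p ∈ E12,
            |eval ![p.1, p.2] ((pderiv (0 : Fin 2))^[α 0] ((pderiv (1 : Fin 2))^[α 1] P))|
              ≤ M ^ (α 0 + α 1) * ((P.totalDegree : ℝ)) ^ (m * ((α 0 + α 1 : ℕ) : ℝ)) * C := by
  rintro ⟨M, m, hM, hm, H⟩
  obtain ⟨a, ⟨ha₀, ha₁⟩, K, hK, hsmall⟩ := exists_abs_eval_cubeRootWitness_le
  have hlower : ∀ n : ℕ, 1 ≤ n → 1 ≤ M * 3 ^ m * K * ((n : ℝ) ^ m * a ^ n) := by
    intro n hn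
    have hmarkov : 1 ≤ M * ((cubeRootWitness n).totalDegree : ℝ) ^ m * (K * a ^ n) := by
      simpa [pderiv_one_cubeRootWitness] using
        H (cubeRootWitness n) ((degreeOf_one_cubeRootWitness_le n).trans one_le_two)
          ![0, 1] _ (hsmall n) _ half_mem_E12
    have hdeg : ((cubeRootWitness n).totalDegree : ℝ) ^ m ≤ 3 ^ m * (n : ℝ) ^ m := by
      rw [← Real.mul_rpow (by norm_num) n.cast_nonneg]
      refine Real.rpow_le_rpow (Nat.cast_nonneg _) ?_ hm.le
      exact_mod_cast (totalDegree_cubeRootWitness_le n).trans (by omega)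
    calc (1 : ℝ) ≤ M * ((cubeRootWitness n).totalDegree : ℝ) ^ m * (K * a ^ n) := hmarkov
      _ ≤ M * (3 ^ m * (n : ℝ) ^ m) * (K * a ^ n) := by gcongr
      _ = M * 3 ^ m * K * ((n : ℝ) ^ m * a ^ n) := by ring
  have hlimit : Tendsto (fun n : ℕ => M * 3 ^ m * K * ((n : ℝ) ^ m * a ^ n)) atTop (𝓝 0) := by
    simpa using (tendsto_rpow_mul_pow_atTop_nhds_zero m ha₀ ha₁).const_mul (M * 3 ^ m * K)
  obtain ⟨n, hn_small, hn⟩ :=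
    ((hlimit.eventually_lt_const one_pos).and (eventually_ge_atTop 1)).exists
  exact (hlower n hn).not_gt hn_small
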